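/- arXiv:2605.15596 — 2 statements merged into one kernel-verified Lean document; each statement's English description precedes it below -/
import Mathlib

section
/- For every φ ∈ (-1,1), the sequence ℓ ↦ ℓ·(η_ℓ(φ) - 1) converges to 2φ/(1-φ²) as ℓ → ∞, where η_ℓ(φ) = (ℓ - ℓφ²)/(2φ^{ℓ+1} - 2φ - ℓφ² + ℓ). -/
open Filter Topology

/-! Writing `c = 1 - φ²` and `r ℓ = 2φ(1 - φ^ℓ)`, the coefficient is `η_ℓ = ℓc / (ℓc - r ℓ)`, so
`ℓ (η_ℓ - 1) = r ℓ / (c - r ℓ / ℓ)`. Since `φ^ℓ → 0`, this tends to `2φ / (1 - φ²)`. -/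

theorem tendsto_natCast_mul_div_sub_one {c r : ℝ} {f : ℕ → ℝ} (hc : c ≠ 0)
    (hf : Tendsto f atTop (𝓝 r)) :
    Tendsto (fun n : ℕ => (n : ℝ) * (n * c / (n * c - f n) - 1)) atTop (𝓝 (r / c)) := by
  have hden : Tendsto (fun n : ℕ => c - f n / n) atTop (𝓝 c) := by
    simpa using tendsto_const_nhds.sub (hf.div_atTop tendsto_natCast_atTop_atTop)
  refine (hf.div hden hc).congr' ?_
  filter_upwards [hden.eventually_ne hc, eventually_gt_atTop 0] with n hn hn0
  have hn0' : (n : ℝ) ≠ 0 := by positivity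
  have hfactor : n * c - f n = n * (c - f n / n) := by field_simp
  rw [Pi.div_apply, hfactor, mul_div_mul_left _ _ hn0', div_sub_one hn, sub_sub_cancel,
    mul_div_assoc', mul_div_cancel₀ _ hn0']

/-- First-order correction of the AR(1) postcoloring coefficient converges to the
    AR(1) dependence ratio 2φ/(1-φ²). -/
theorem ar1_postcoloring_first_order (φ : ℝ) (h1 : -1 < φ) (h2 : φ < 1) :
    Filter.Tendsto
      (fun ℓ : ℕ => (ℓ : ℝ) *
        (((ℓ : ℝ) - ℓ * φ ^ 2) / (2 * φ ^ (ℓ + 1) - 2 * φ - ℓ * φ ^ 2 + ℓ) - 1))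
      Filter.atTop (nhds (2 * φ / (1 - φ ^ 2))) := by
  have hc : 1 - φ ^ 2 ≠ 0 := by nlinarith
  have hpow : Tendsto (fun ℓ : ℕ => φ ^ ℓ) atTop (𝓝 0) :=
    tendsto_pow_atTop_nhds_zero_of_abs_lt_one (abs_lt.mpr ⟨h1, h2⟩)
  have hr : Tendsto (fun ℓ : ℕ => 2 * φ * (1 - φ ^ ℓ)) atTop (𝓝 (2 * φ)) := by
    simpa using (tendsto_const_nhds (x := (1 : ℝ)).sub hpow).const_mul (2 * φ)
  convert tendsto_natCast_mul_div_sub_one hc hr using 5 with ℓ <;> ring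
end

section
/- Let (γ_k)_{k∈ℤ} be a real sequence with ∑_{k∈ℤ} |k|^p |γ_k| < ∞ for some p ∈ ℕ, and let K : ℝ → [-1,1] be an even function with K(0) = 1 such that B := lim_{t→0⁺} (K(t) - 1)/t^p exists in ℝ. Then ℓ^p · (∑_{k∈ℤ} γ_k − ∑_{k∈ℤ} K(k/ℓ) γ_k) → −B · ∑_{k∈ℤ} |k|^p γ_k as ℓ → ∞, provided additionally that sup_{t≥1} |K(t)|/t^p < ∞. -/
/-!
Away from `0`, the bounds `|K| ≤ 1` and `|K t| ≤ C t ^ p` give `|K t - 1| ≤ M |t| ^ p`, and near `0`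
the limit defining `B` gives the same; evenness covers `t < 0`. Hence the summands
`ℓ ^ p (1 - K (k / ℓ)) γ k` of the rescaled bias are dominated by `M |k| ^ p |γ k|`, while each
tends to `-B |k| ^ p γ k`, so dominated convergence for series (Tannery's theorem) gives the limit.
-/

open Filter Topology

lemma Function.Even.apply_abs {α β : Type*} [AddGroup α] [LinearOrder α] {f : α → β}
    (hf : f.Even) (x : α) : f |x| = f x := by
  rcases abs_choice x with h | h <;> simp only [h, hf.eq]

lemma exists_abs_le_mul_pow_of_tendsto_div_pow {f : ℝ → ℝ} {p : ℕ} {B : ℝ}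
    (hf : Tendsto (fun t => f t / t ^ p) (𝓝[>] 0) (𝓝 B)) :
    ∃ δ > 0, ∀ t ∈ Set.Ioo 0 δ, |f t| ≤ (|B| + 1) * t ^ p := by
  have hlt : ∀ᶠ t in 𝓝[>] 0, |f t / t ^ p| < |B| + 1 :=
    hf.abs.eventually (gt_mem_nhds (lt_add_one _))
  obtain ⟨δ, hδ, hsub⟩ := mem_nhdsGT_iff_exists_Ioo_subset.1 hlt
  refine ⟨δ, hδ, fun t ht => ?_⟩
  have htp : 0 < t ^ p := pow_pos ht.1 p
  have hratio : |f t / t ^ p| < |B| + 1 := hsub ht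
  rw [abs_div, abs_of_pos htp, div_lt_iff₀ htp] at hratio
  exact hratio.le

lemma abs_sub_one_le_mul_pow_of_le {K : ℝ → ℝ} {p : ℕ} {C δ t : ℝ} (hK : ∀ t, |K t| ≤ 1)
    (hC : ∀ t : ℝ, 1 ≤ t → |K t| ≤ C * t ^ p) (hδ : 0 < δ) (ht : δ ≤ t) :
    |K t - 1| ≤ (|C| + 2 / δ ^ p) * t ^ p := by
  have htp : 0 ≤ t ^ p := pow_nonneg (hδ.le.trans ht) p
  have htwo : 2 ≤ 2 / δ ^ p * t ^ p := by
    rw [div_mul_eq_mul_div, le_div_iff₀ (pow_pos hδ p)]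
    exact mul_le_mul_of_nonneg_left (pow_le_pow_left₀ hδ.le ht p) zero_le_two
  have hCt : C * t ^ p ≤ |C| * t ^ p := mul_le_mul_of_nonneg_right (le_abs_self C) htp
  have hKt : |K t| ≤ |C| * t ^ p + 1 := by
    rcases le_total 1 t with h1 | h1
    · linarith [hC t h1]
    · linarith [hK t, mul_nonneg (abs_nonneg C) htp]
  calc |K t - 1| ≤ |K t| + 1 := by simpa using abs_sub (K t) 1
    _ ≤ (|C| + 2 / δ ^ p) * t ^ p := by linarith

lemma exists_abs_sub_one_le_mul_abs_pow {K : ℝ → ℝ} {p : ℕ} {B C : ℝ} (hK : ∀ t, |K t| ≤ 1)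
    (hKeven : K.Even) (hK0 : K 0 = 1)
    (hB : Tendsto (fun t => (K t - 1) / t ^ p) (𝓝[>] 0) (𝓝 B))
    (hC : ∀ t : ℝ, 1 ≤ t → |K t| ≤ C * t ^ p) :
    ∃ M, ∀ t, |K t - 1| ≤ M * |t| ^ p := by
  obtain ⟨δ, hδ, hsmall⟩ := exists_abs_le_mul_pow_of_tendsto_div_pow hB
  refine ⟨max (|B| + 1) (|C| + 2 / δ ^ p), fun t => ?_⟩
  rw [← hKeven.apply_abs]
  rcases (abs_nonneg t).eq_or_lt with h0 | hpos
  · rw [← h0, hK0, sub_self, abs_zero]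
    exact mul_nonneg (le_max_of_le_left (by positivity)) (pow_nonneg le_rfl p)
  have htp : 0 ≤ |t| ^ p := pow_nonneg hpos.le p
  rcases lt_or_ge |t| δ with hlt | hge
  · exact (hsmall _ ⟨hpos, hlt⟩).trans (mul_le_mul_of_nonneg_right (le_max_left _ _) htp)
  · exact (abs_sub_one_le_mul_pow_of_le hK hC hδ hge).trans
      (mul_le_mul_of_nonneg_right (le_max_right _ _) htp)

lemma tendsto_natCast_pow_mul_apply_div {f : ℝ → ℝ} {p : ℕ} {B a : ℝ} (ha : 0 < a)
    (hf : Tendsto (fun t => f t / t ^ p) (𝓝[>] 0) (𝓝 B)) :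
    Tendsto (fun ℓ : ℕ => (ℓ : ℝ) ^ p * f (a / ℓ)) atTop (𝓝 (a ^ p * B)) := by
  have hdiv : Tendsto (fun ℓ : ℕ => a / ℓ) atTop (𝓝[>] 0) :=
    tendsto_nhdsWithin_iff.2 ⟨tendsto_const_div_atTop_nhds_zero_nat a,
      (eventually_gt_atTop 0).mono fun ℓ hℓ => div_pos ha (Nat.cast_pos.2 hℓ)⟩
  refine ((hf.comp hdiv).const_mul (a ^ p)).congr' ?_
  filter_upwards [eventually_gt_atTop 0] with ℓ hℓ
  have : (ℓ : ℝ) ≠ 0 := Nat.cast_ne_zero.2 hℓ.ne'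
  simp only [Function.comp_apply, div_pow]
  field_simp [ha.ne']

lemma tendsto_natCast_pow_mul_one_sub_apply_div {K : ℝ → ℝ} {p : ℕ} {B : ℝ} (hp : p ≠ 0)
    (hKeven : K.Even) (hK0 : K 0 = 1)
    (hB : Tendsto (fun t => (K t - 1) / t ^ p) (𝓝[>] 0) (𝓝 B)) (x : ℝ) :
    Tendsto (fun ℓ : ℕ => (ℓ : ℝ) ^ p * (1 - K (x / ℓ))) atTop (𝓝 (-B * |x| ^ p)) := by
  rcases (abs_nonneg x).eq_or_lt with h0 | hpos
  · simp [abs_eq_zero.1 h0.symm, hK0, zero_pow hp]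
  have h := (tendsto_natCast_pow_mul_apply_div hpos hB).neg
  rw [show -(|x| ^ p * B) = -B * |x| ^ p by ring] at h
  refine h.congr fun ℓ => ?_
  rw [← hKeven.apply_abs (x / ℓ), abs_div, Nat.abs_cast]
  ring

lemma abs_natCast_pow_mul_one_sub_apply_div_le {K : ℝ → ℝ} {p : ℕ} {M : ℝ}
    (hM : ∀ t, |K t - 1| ≤ M * |t| ^ p) {ℓ : ℕ} (hℓ : 0 < ℓ) (x : ℝ) :
    |(ℓ : ℝ) ^ p * (1 - K (x / ℓ))| ≤ M * |x| ^ p := by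
  have hℓ' : (0 : ℝ) < ℓ := Nat.cast_pos.2 hℓ
  rw [abs_mul, abs_sub_comm, abs_of_pos (pow_pos hℓ' p)]
  calc (ℓ : ℝ) ^ p * |K (x / ℓ) - 1| ≤ (ℓ : ℝ) ^ p * (M * |x / ℓ| ^ p) :=
        mul_le_mul_of_nonneg_left (hM _) (pow_nonneg hℓ'.le p)
    _ = M * |x| ^ p := by
        rw [abs_div, Nat.abs_cast, div_pow]
        field_simp

lemma summable_abs_of_summable_natAbs_pow_mul_abs {γ : ℤ → ℝ} {p : ℕ}
    (hγ : Summable fun k : ℤ => (k.natAbs : ℝ) ^ p * |γ k|) : Summable fun k => |γ k| := by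
  refine hγ.of_norm_bounded_eventually ?_
  filter_upwards [(Set.finite_singleton (0 : ℤ)).compl_mem_cofinite] with k hk
  have hk1 : (1 : ℝ) ≤ (k.natAbs : ℝ) ^ p :=
    one_le_pow₀ (Nat.one_le_cast.2 (Int.natAbs_pos.2 hk))
  rw [Real.norm_eq_abs, abs_abs]
  exact le_mul_of_one_le_left (abs_nonneg _) hk1

/-- Leading smoothing bias of a p-th order kernel: v − M_{ℓ,K} = −B v_p / ℓ^p + o(ℓ^{-p}). -/
theorem kernel_smoothing_bias (γ : ℤ → ℝ) (p : ℕ) (hp : 1 ≤ p)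
    (hγ : Summable (fun k : ℤ => (k.natAbs : ℝ) ^ p * |γ k|))
    (K : ℝ → ℝ) (hK1 : ∀ t, K t ∈ Set.Icc (-1 : ℝ) 1)
    (hKeven : ∀ t, K (-t) = K t) (hK0 : K 0 = 1)
    (B : ℝ)
    (hB : Filter.Tendsto (fun t : ℝ => (K t - 1) / t ^ p)
      (nhdsWithin 0 (Set.Ioi 0)) (nhds B))
    (C : ℝ) (hC : ∀ t : ℝ, 1 ≤ t → |K t| ≤ C * t ^ p) :
    Filter.Tendsto
      (fun ℓ : ℕ => (ℓ : ℝ) ^ p *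
        ((∑' k : ℤ, γ k) - ∑' k : ℤ, K ((k : ℝ) / (ℓ : ℝ)) * γ k))
      Filter.atTop (nhds (-B * ∑' k : ℤ, (k.natAbs : ℝ) ^ p * γ k)) := by
  have hK : ∀ t, |K t| ≤ 1 := fun t => abs_le.2 (hK1 t)
  obtain ⟨M, hM⟩ := exists_abs_sub_one_le_mul_abs_pow hK hKeven hK0 hB hC
  have hγabs := summable_abs_of_summable_natAbs_pow_mul_abs hγ
  have hnatAbs (k : ℤ) : (k.natAbs : ℝ) = |(k : ℝ)| := by rw [Nat.cast_natAbs, Int.cast_abs]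
  have hdiff (ℓ : ℕ) : (∑' k : ℤ, γ k) - ∑' k : ℤ, K ((k : ℝ) / ℓ) * γ k =
      ∑' k : ℤ, (1 - K ((k : ℝ) / ℓ)) * γ k := by
    have hKγ : Summable fun k : ℤ => K ((k : ℝ) / ℓ) * γ k :=
      hγabs.of_norm_bounded fun k => by
        rw [Real.norm_eq_abs, abs_mul]
        exact mul_le_of_le_one_left (abs_nonneg _) (hK _)
    rw [← hγabs.of_abs.tsum_sub hKγ]
    exact tsum_congr fun k => by ring
  have hlim : Tendsto (fun ℓ : ℕ => ∑' k : ℤ, (ℓ : ℝ) ^ p * (1 - K ((k : ℝ) / ℓ)) * γ k)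
      atTop (𝓝 (∑' k : ℤ, -B * (k.natAbs : ℝ) ^ p * γ k)) := by
    refine tendsto_tsum_of_dominated_convergence (hγ.mul_left M) (fun k => ?_) ?_
    · simpa only [hnatAbs] using
        (tendsto_natCast_pow_mul_one_sub_apply_div (by omega) hKeven hK0 hB k).mul_const (γ k)
    · filter_upwards [eventually_gt_atTop 0] with ℓ hℓ k
      rw [Real.norm_eq_abs, abs_mul, hnatAbs, ← mul_assoc]
      exact mul_le_mul_of_nonneg_right
        (abs_natCast_pow_mul_one_sub_apply_div_le hM hℓ k) (abs_nonneg _)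
  simp only [mul_assoc, tsum_mul_left] at hlim
  simpa only [hdiff] using hlim
end
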